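/- arXiv:2109.08928 — 7 statements merged into one kernel-verified Lean document; each statement's English description precedes it below -/
import Mathlib

section
/- Let A : U → G be a discrete connection form with D-type domain U. For (q,r) ∈ U' := (id_P × π)(U) define h_A(q,r) := (q, A(q,q')⁻¹ • q'), where q' is any point with π(q') = r and (q,q') ∈ U. Then: (a) h_A(q,r) does not depend on the choice of q'; and (b) h_A is a discrete horizontal lift with domain U', i.e., if h_A(q,r) = (q₀',q₁') then h_A(g • q, r) = (g • q₀', g • q₁') for all g ∈ G, (id_P × π)(h_A(q,r)) = (q,r) for all (q,r) ∈ U', and h_A(q,π(q)) = (q,q) for all q ∈ P. -/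
/-!
The lift is well defined because moving `q'` along its fibre to `g • q'` multiplies
`A(q,q')` on the left by `g`, which `A(q, g • q')⁻¹` then cancels. Equivariance in `q`
is the right-hand transformation rule of `A`, and the normalization is the special
choice `q' := q`, where `A(q,q) = e`.
-/

def ConnectionFormEquivariantOn {G P : Type*} [Group G] [MulAction G P]
    (U : Set (P × P)) (A : P → P → G) : Prop :=
  ∀ q₀ q₁ : P, (q₀, q₁) ∈ U → ∀ g₀ g₁ : G, A (g₀ • q₀) (g₁ • q₁) = g₁ * A q₀ q₁ * g₀⁻¹

namespace ConnectionFormEquivariantOn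

variable {G P : Type*} [Group G] [MulAction G P] {U : Set (P × P)} {A : P → P → G}
  {q q' : P}

theorem apply_smul_right (hA : ConnectionFormEquivariantOn U A) (h : (q, q') ∈ U) (g : G) :
    A q (g • q') = g * A q q' := by
  simpa using hA q q' h 1 g

theorem apply_smul_left (hA : ConnectionFormEquivariantOn U A) (h : (q, q') ∈ U) (g : G) :
    A (g • q) q' = A q q' * g⁻¹ := by
  simpa using hA q q' h g 1

theorem inv_apply_smul_smul_right (hA : ConnectionFormEquivariantOn U A) (h : (q, q') ∈ U)
    (g : G) : (A q (g • q'))⁻¹ • g • q' = (A q q')⁻¹ • q' := by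
  rw [hA.apply_smul_right h, mul_inv_rev, mul_smul, inv_smul_smul]

theorem inv_apply_smul_left (hA : ConnectionFormEquivariantOn U A) (h : (q, q') ∈ U)
    (g : G) : (A (g • q) q')⁻¹ • q' = g • ((A q q')⁻¹ • q') := by
  rw [hA.apply_smul_left h, mul_inv_rev, inv_inv, mul_smul]

end ConnectionFormEquivariantOn

theorem discrete_connection_form_gives_horizontal_lift_general
    {G : Type*} [Group G] {P : Type*} [MulAction G P] {B : Type*}
    (π : P → B)
    (hπ : ∀ q₀ q₁ : P, π q₀ = π q₁ ↔ ∃ g : G, g • q₀ = q₁)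
    (U : Set (P × P))
    (hUvert : ∀ q₀ q₁ : P, π q₀ = π q₁ → (q₀, q₁) ∈ U)
    (A : P → P → G)
    (hAid : ∀ q : P, A q q = 1)
    (hAequiv : ∀ q₀ q₁ : P, (q₀, q₁) ∈ U → ∀ g₀ g₁ : G,
      A (g₀ • q₀) (g₁ • q₁) = g₁ * A q₀ q₁ * g₀⁻¹) :
    -- (a) the value `h_A(q,r) = (q, A(q,q')⁻¹ • q')` does not depend on the choice of `q'`
    (∀ (q : P) (r : B) (q' q'' : P), π q' = r → π q'' = r →
      (q, q') ∈ U → (q, q'') ∈ U →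
      (A q q')⁻¹ • q' = (A q q'')⁻¹ • q'') ∧
    -- (b)(i) equivariance: `h_A(g • q, r) = (g • q, g • (A(q,q')⁻¹ • q'))`
    (∀ (q : P) (r : B) (q' : P), π q' = r → (q, q') ∈ U → ∀ g : G,
      (A (g • q) q')⁻¹ • q' = g • ((A q q')⁻¹ • q')) ∧
    -- (b)(ii) section: `(id × π)(h_A(q,r)) = (q,r)` (the first component is `q` by
    -- definition, so only the second component is stated)
    (∀ (q : P) (r : B) (q' : P), π q' = r → (q, q') ∈ U →
      π ((A q q')⁻¹ • q') = r) ∧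
    -- (b)(iii) normalization: `h_A(q, π(q)) = (q, q)`
    (∀ (q q' : P), π q' = π q → (q, q') ∈ U →
      (A q q')⁻¹ • q' = q) := by
  have hA : ConnectionFormEquivariantOn U A := hAequiv
  have independent : ∀ (q : P) (r : B) (q' q'' : P), π q' = r → π q'' = r →
      (q, q') ∈ U → (q, q'') ∈ U → (A q q')⁻¹ • q' = (A q q'')⁻¹ • q'' := by
    rintro q r q' q'' rfl h'' hq' -
    obtain ⟨g, rfl⟩ := (hπ q' q'').mp h''.symm
    exact (hA.inv_apply_smul_smul_right hq' g).symm
  refine ⟨independent, fun q _ q' _ hq' g => hA.inv_apply_smul_left hq' g, ?_, ?_⟩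
  · rintro q r q' rfl -
    exact ((hπ q' _).mpr ⟨(A q q')⁻¹, rfl⟩).symm
  · intro q q' hq'q hq'
    rw [independent q _ q' q hq'q rfl hq' (hUvert q q rfl), hAid, inv_one, one_smul]

/-- given a discrete connection form `A` with D-type domain `U`,
the formula `h_A(q,r) := (q, A(q,q')⁻¹ • q')` (for any `q'` over `r` with `(q,q') ∈ U`)
is independent of the choice of `q'` and defines a discrete horizontal lift with
domain `U' = (id × π)(U)`. -/
theorem discrete_connection_form_gives_horizontal_lift
    {G : Type*} [Group G] {P : Type*} [MulAction G P] {B : Type*}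
    (π : P → B)
    (hfree : ∀ (g : G) (q : P), g • q = q → g = 1)
    (hπ : ∀ q₀ q₁ : P, π q₀ = π q₁ ↔ ∃ g : G, g • q₀ = q₁)
    (U : Set (P × P))
    (hUinv : ∀ q₀ q₁ : P, (q₀, q₁) ∈ U → ∀ g₀ g₁ : G, (g₀ • q₀, g₁ • q₁) ∈ U)
    (hUvert : ∀ q₀ q₁ : P, π q₀ = π q₁ → (q₀, q₁) ∈ U)
    (A : P → P → G)
    (hAid : ∀ q : P, A q q = 1)
    (hAequiv : ∀ q₀ q₁ : P, (q₀, q₁) ∈ U → ∀ g₀ g₁ : G,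
      A (g₀ • q₀) (g₁ • q₁) = g₁ * A q₀ q₁ * g₀⁻¹) :
    -- (a) the value `h_A(q,r) = (q, A(q,q')⁻¹ • q')` does not depend on the choice of `q'`
    (∀ (q : P) (r : B) (q' q'' : P), π q' = r → π q'' = r →
      (q, q') ∈ U → (q, q'') ∈ U →
      (A q q')⁻¹ • q' = (A q q'')⁻¹ • q'') ∧
    -- (b)(i) equivariance: `h_A(g • q, r) = (g • q, g • (A(q,q')⁻¹ • q'))`
    (∀ (q : P) (r : B) (q' : P), π q' = r → (q, q') ∈ U → ∀ g : G,
      (A (g • q) q')⁻¹ • q' = g • ((A q q')⁻¹ • q')) ∧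
    -- (b)(ii) section: `(id × π)(h_A(q,r)) = (q,r)` (the first component is `q` by
    -- definition, so only the second component is stated)
    (∀ (q : P) (r : B) (q' : P), π q' = r → (q, q') ∈ U →
      π ((A q q')⁻¹ • q') = r) ∧
    -- (b)(iii) normalization: `h_A(q, π(q)) = (q, q)`
    (∀ (q q' : P), π q' = π q → (q, q') ∈ U →
      (A q q')⁻¹ • q' = q) :=
  discrete_connection_form_gives_horizontal_lift_general π hπ U hUvert A hAid hAequiv
end

section
/- Let h : U' → P × P be a discrete horizontal lift, where U' = (id_P × π)(U) for a D-type set U ⊆ P × P, and write h₂ := pr₂ ∘ h. For (q₀,q₁) ∈ U define A_h(q₀,q₁) := κ(h₂(q₀,π(q₁)), q₁). Then h₂(q₀,π(q₁)) lies in the same G-orbit as q₁ (so A_h is well defined), and A_h is a discrete connection form with domain U: A_h(q,q) = e for all q ∈ P, and A_h(g₀ • q₀, g₁ • q₁) = g₁ · A_h(q₀,q₁) · g₀⁻¹ for all (q₀,q₁) ∈ U and g₀,g₁ ∈ G. -/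
/-! The lift `h₂(q₀, π q₁)` lands in the orbit of `q₁`, and `G`-equivariance of `h` in its first
argument together with `G`-invariance of `π q₁` moves it by `g₀`. Since the action is free, the
element `κ x y` carrying `x` to `y` is unique, so `κ (g₀ • x) (g₁ • y) = g₁ * κ x y * g₀⁻¹`
because that element visibly carries `g₀ • x` to `g₁ • y`. -/

section ConnectingElement

variable {G P B : Type*} [Group G] [MulAction G P]

theorem eq_of_smul_eq_smul_of_free (hfree : ∀ (g : G) (q : P), g • q = q → g = 1)
    {g g' : G} {q : P} (hg : g • q = g' • q) : g = g' :=
  (inv_mul_eq_one.mp (hfree (g'⁻¹ * g) q (by rw [mul_smul, hg, inv_smul_smul]))).symm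

variable {π : P → B} {κ : P → P → G}

theorem connecting_eq_of_smul_eq (hfree : ∀ (g : G) (q : P), g • q = q → g = 1)
    (hκ : ∀ q₀ q₁ : P, π q₀ = π q₁ → κ q₀ q₁ • q₀ = q₁)
    {q₀ q₁ : P} (hq : π q₀ = π q₁) {g : G} (hg : g • q₀ = q₁) : κ q₀ q₁ = g :=
  eq_of_smul_eq_smul_of_free hfree ((hκ q₀ q₁ hq).trans hg.symm)

theorem connecting_self (hfree : ∀ (g : G) (q : P), g • q = q → g = 1)
    (hκ : ∀ q₀ q₁ : P, π q₀ = π q₁ → κ q₀ q₁ • q₀ = q₁) (q : P) : κ q q = 1 :=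
  connecting_eq_of_smul_eq hfree hκ rfl (one_smul G q)

theorem connecting_smul_smul (hfree : ∀ (g : G) (q : P), g • q = q → g = 1)
    (hκ : ∀ q₀ q₁ : P, π q₀ = π q₁ → κ q₀ q₁ • q₀ = q₁)
    (hπ : ∀ (g : G) (q : P), π (g • q) = π q)
    {q₀ q₁ : P} (hq : π q₀ = π q₁) (g₀ g₁ : G) :
    κ (g₀ • q₀) (g₁ • q₁) = g₁ * κ q₀ q₁ * g₀⁻¹ := by
  refine connecting_eq_of_smul_eq hfree hκ (by rw [hπ, hπ, hq]) ?_
  rw [smul_smul, mul_assoc, inv_mul_cancel, mul_one, mul_smul, hκ q₀ q₁ hq]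

end ConnectingElement

theorem discrete_horizontal_lift_gives_connection_form_general
    {G : Type*} [Group G] {P : Type*} [MulAction G P] {B : Type*}
    (π : P → B)
    (hfree : ∀ (g : G) (q : P), g • q = q → g = 1)
    (hπ : ∀ q₀ q₁ : P, π q₀ = π q₁ ↔ ∃ g : G, g • q₀ = q₁)
    (κ : P → P → G)
    (hκ : ∀ q₀ q₁ : P, π q₀ = π q₁ → κ q₀ q₁ • q₀ = q₁)
    (U : Set (P × P))
    (U' : Set (P × B))
    (hU' : U' = {x : P × B | ∃ q₁ : P, (x.1, q₁) ∈ U ∧ π q₁ = x.2})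
    (h : P → B → P × P)
    (hhequiv : ∀ q r, (q, r) ∈ U' → ∀ g : G,
      h (g • q) r = (g • (h q r).1, g • (h q r).2))
    (hhsec : ∀ q r, (q, r) ∈ U' → (h q r).1 = q ∧ π ((h q r).2) = r)
    (hhnorm : ∀ q : P, h q (π q) = (q, q)) :
    -- well-definedness of `A_h`: `h₂(q₀, π(q₁))` is in the same orbit as `q₁`
    (∀ q₀ q₁ : P, (q₀, q₁) ∈ U → π ((h q₀ (π q₁)).2) = π q₁) ∧
    -- `A_h(q,q) = e`
    (∀ q : P, κ ((h q (π q)).2) q = 1) ∧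
    -- equivariance of `A_h`
    (∀ q₀ q₁ : P, (q₀, q₁) ∈ U → ∀ g₀ g₁ : G,
      κ ((h (g₀ • q₀) (π (g₁ • q₁))).2) (g₁ • q₁)
        = g₁ * κ ((h q₀ (π q₁)).2) q₁ * g₀⁻¹) := by
  have hπ_smul : ∀ (g : G) (q : P), π (g • q) = π q := fun g q => ((hπ q _).2 ⟨g, rfl⟩).symm
  have hmem : ∀ q₀ q₁ : P, (q₀, q₁) ∈ U → (q₀, π q₁) ∈ U' := fun q₀ q₁ hq => hU' ▸ ⟨q₁, hq, rfl⟩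
  have horbit : ∀ q₀ q₁ : P, (q₀, q₁) ∈ U → π ((h q₀ (π q₁)).2) = π q₁ :=
    fun q₀ q₁ hq => (hhsec q₀ (π q₁) (hmem q₀ q₁ hq)).2
  refine ⟨horbit, fun q => by rw [hhnorm]; exact connecting_self hfree hκ q, ?_⟩
  intro q₀ q₁ hq g₀ g₁
  rw [hπ_smul, hhequiv q₀ (π q₁) (hmem q₀ q₁ hq)]
  exact connecting_smul_smul hfree hκ hπ_smul (horbit q₀ q₁ hq) g₀ g₁

/-- given a discrete horizontal lift `h` with domain
`U' = (id × π)(U)`, the map `A_h(q₀,q₁) := κ(h₂(q₀,π(q₁)), q₁)` is well defined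
(`h₂(q₀,π(q₁))` lies in the orbit of `q₁`) and is a discrete connection form with
domain `U`. -/
theorem discrete_horizontal_lift_gives_connection_form
    {G : Type*} [Group G] {P : Type*} [MulAction G P] {B : Type*}
    (π : P → B)
    (hfree : ∀ (g : G) (q : P), g • q = q → g = 1)
    (hπ : ∀ q₀ q₁ : P, π q₀ = π q₁ ↔ ∃ g : G, g • q₀ = q₁)
    (κ : P → P → G)
    (hκ : ∀ q₀ q₁ : P, π q₀ = π q₁ → κ q₀ q₁ • q₀ = q₁)
    (U : Set (P × P))
    (hUinv : ∀ q₀ q₁ : P, (q₀, q₁) ∈ U → ∀ g₀ g₁ : G, (g₀ • q₀, g₁ • q₁) ∈ U)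
    (hUvert : ∀ q₀ q₁ : P, π q₀ = π q₁ → (q₀, q₁) ∈ U)
    (U' : Set (P × B))
    (hU' : U' = {x : P × B | ∃ q₁ : P, (x.1, q₁) ∈ U ∧ π q₁ = x.2})
    (h : P → B → P × P)
    (hhequiv : ∀ q r, (q, r) ∈ U' → ∀ g : G,
      h (g • q) r = (g • (h q r).1, g • (h q r).2))
    (hhsec : ∀ q r, (q, r) ∈ U' → (h q r).1 = q ∧ π ((h q r).2) = r)
    (hhnorm : ∀ q : P, h q (π q) = (q, q)) :
    -- well-definedness of `A_h`: `h₂(q₀, π(q₁))` is in the same orbit as `q₁`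
    (∀ q₀ q₁ : P, (q₀, q₁) ∈ U → π ((h q₀ (π q₁)).2) = π q₁) ∧
    -- `A_h(q,q) = e`
    (∀ q : P, κ ((h q (π q)).2) q = 1) ∧
    -- equivariance of `A_h`
    (∀ q₀ q₁ : P, (q₀, q₁) ∈ U → ∀ g₀ g₁ : G,
      κ ((h (g₀ • q₀) (π (g₁ • q₁))).2) (g₁ • q₁)
        = g₁ * κ ((h q₀ (π q₁)).2) q₁ * g₀⁻¹) :=
  discrete_horizontal_lift_gives_connection_form_general π hfree hπ κ hκ U U' hU' h hhequiv hhsec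
    hhnorm
end

section
/- Let A be a discrete connection form with D-type domain U, s : V → P a section over V ⊆ B, and m_• = (m₀,…,m_N) a sequence in B with (m_{k-1},m_k) ∈ V'' for all k = 1,…,N. Let q_• be the discrete horizontal lift of m_• (with respect to h_A) starting at q₀ ∈ π⁻¹(m₀). Then: (a) there are unique g_k ∈ G with q_k = g_k • s(m_k) for k = 0,…,N; (b) g_k = g_{k-1} · A_s(m_{k-1},m_k)⁻¹ for each k = 1,…,N, and consequently PT(m_•)(g₀ • s(m₀)) = g_N • s(m_N) where g_N = g₀ · ∏_{k=1}^N A_s(m_{k-1},m_k)⁻¹ (ordered product a₁·a₂·⋯·a_N). -/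
/-!
In the local trivialisation given by `s`, equivariance of `A` computes one step of the
horizontal lift independently of the representative `q'` chosen in the fibre:
`A(g • s(m), h • s(m'))⁻¹ • (h • s(m')) = (g * A_s(m, m')⁻¹) • s(m')`. Induction along the
path then writes every `q_k` as `g_k • s(m_k)`, freeness makes `g_k` unique and turns the step
into the recursion `g_{k+1} = g_k * A_s(m_k, m_{k+1})⁻¹`, which telescopes to the ordered product.
-/

theorem eq_mul_prod_map_range_of_forall_succ {M : Type*} [Monoid M] {f a : ℕ → M} {N : ℕ}
    (h : ∀ k < N, f (k + 1) = f k * a k) :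
    f N = f 0 * ((List.range N).map a).prod := by
  induction N with
  | zero => simp
  | succ n ih =>
    rw [h n n.lt_succ_self, ih fun k hk => h k (hk.trans n.lt_succ_self), List.prod_range_succ,
      mul_assoc]

theorem inv_smul_eq_mul_inv_smul_of_equivariant {G P : Type*} [Group G] [MulAction G P]
    {U : Set (P × P)} {A : P → P → G}
    (hAequiv : ∀ q₀ q₁ : P, (q₀, q₁) ∈ U → ∀ g₀ g₁ : G,
      A (g₀ • q₀) (g₁ • q₁) = g₁ * A q₀ q₁ * g₀⁻¹)
    {p p' : P} (hU : (p, p') ∈ U) (g h : G) :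
    (A (g • p) (h • p'))⁻¹ • h • p' = (g * (A p p')⁻¹) • p' := by
  rw [hAequiv p p' hU g h, smul_smul]
  congr 1
  group

theorem local_expression_of_discrete_parallel_transport_general
    {G : Type*} [Group G] {P : Type*} [MulAction G P] {B : Type*}
    (π : P → B)
    (hfree : ∀ (g : G) (q : P), g • q = q → g = 1)
    (hπ : ∀ q₀ q₁ : P, π q₀ = π q₁ ↔ ∃ g : G, g • q₀ = q₁)
    (U : Set (P × P))
    (A : P → P → G)
    (hAequiv : ∀ q₀ q₁ : P, (q₀, q₁) ∈ U → ∀ g₀ g₁ : G,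
      A (g₀ • q₀) (g₁ • q₁) = g₁ * A q₀ q₁ * g₀⁻¹)
    (V : Set B) (s : B → P) (hs : ∀ m ∈ V, π (s m) = m)
    (V'' : Set (B × B))
    (hV'' : V'' = {p : B × B | p.1 ∈ V ∧ p.2 ∈ V ∧ (s p.1, s p.2) ∈ U})
    -- the discrete path `m_•` is subordinated to `V''`
    (N : ℕ) (m : ℕ → B) (hm0V : m 0 ∈ V)
    (hm : ∀ k < N, (m k, m (k + 1)) ∈ V'')
    -- `q_•` is the discrete horizontal lift of `m_•` with respect to `h_A`,
    -- starting at `q 0 ∈ π⁻¹(m₀)`: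
    -- `q (k+1) = h_{A,2}(q k, m (k+1)) = A(q k, q')⁻¹ • q'` for a choice of `q'`
    (q : ℕ → P) (hq0 : π (q 0) = m 0)
    (hlift : ∀ k < N, ∃ q' : P, π q' = m (k + 1) ∧ (q k, q') ∈ U ∧
      q (k + 1) = (A (q k) q')⁻¹ • q') :
    -- (a) unique `g_k` with `q_k = g_k • s(m_k)`
    (∀ k ≤ N, ∃! g : G, q k = g • s (m k)) ∧
    -- (b) the recursion and the resulting parallel transport formula
    (∀ g : ℕ → G, (∀ k ≤ N, q k = g k • s (m k)) →
      (∀ k < N, g (k + 1) = g k * (A (s (m k)) (s (m (k + 1))))⁻¹) ∧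
      g N = g 0 *
        (((List.range N).map (fun k => (A (s (m k)) (s (m (k + 1))))⁻¹)).prod) ∧
      q N = (g 0 *
        (((List.range N).map (fun k => (A (s (m k)) (s (m (k + 1))))⁻¹)).prod))
          • s (m N)) := by
  subst hV''
  have : IsCancelSMul G P := isCancelSMul_iff_eq_one_of_smul_eq.mpr hfree
  have hstep : ∀ k < N, ∀ g : G, q k = g • s (m k) →
      q (k + 1) = (g * (A (s (m k)) (s (m (k + 1))))⁻¹) • s (m (k + 1)) := by
    intro k hk g hg
    obtain ⟨q', hq'π, -, hq'⟩ := hlift k hk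
    obtain ⟨-, hmV, hsU⟩ := hm k hk
    obtain ⟨h, rfl⟩ := (hπ _ q').mp (by rw [hs _ hmV, hq'π])
    rw [hq', hg, inv_smul_eq_mul_inv_smul_of_equivariant hAequiv hsU]
  have hex : ∀ k ≤ N, ∃ g : G, q k = g • s (m k) := by
    intro k hk
    induction k with
    | zero =>
      obtain ⟨g, hg⟩ := (hπ _ (q 0)).mp (by rw [hs _ hm0V, hq0])
      exact ⟨g, hg.symm⟩
    | succ k ih =>
      obtain ⟨g, hg⟩ := ih (Nat.le_of_succ_le hk)
      exact ⟨_, hstep k hk g hg⟩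
  refine ⟨fun k hk => ?_, fun g hg => ?_⟩
  · obtain ⟨g, hg⟩ := hex k hk
    exact ⟨g, hg, fun g' hg' => IsCancelSMul.right_cancel _ _ _ (hg'.symm.trans hg)⟩
  · have hrec : ∀ k < N, g (k + 1) = g k * (A (s (m k)) (s (m (k + 1))))⁻¹ := fun k hk =>
      IsCancelSMul.right_cancel _ _ _ ((hg (k + 1) hk).symm.trans (hstep k hk _ (hg k hk.le)))
    have hprod := eq_mul_prod_map_range_of_forall_succ hrec
    exact ⟨hrec, hprod, hprod ▸ hg N le_rfl⟩

/-- local expression of discrete parallel transport.  If `q_•` is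
the discrete horizontal lift (with respect to `h_A`, the horizontal lift of a
discrete connection form `A`) of a sequence `m_• = (m₀,…,m_N)` subordinated to
`V''`, starting at `q₀ ∈ π⁻¹(m₀)`, then: (a) there are unique `g_k ∈ G` with
`q_k = g_k • s(m_k)`; (b) `g_k = g_{k-1} · A_s(m_{k-1},m_k)⁻¹`, so
`PT(m_•)(g₀ • s(m₀)) = g_N • s(m_N)` with
`g_N = g₀ · ∏_{k=1}^N A_s(m_{k-1},m_k)⁻¹` (ordered product). -/
theorem local_expression_of_discrete_parallel_transport
    {G : Type*} [Group G] {P : Type*} [MulAction G P] {B : Type*}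
    (π : P → B)
    (hfree : ∀ (g : G) (q : P), g • q = q → g = 1)
    (hπ : ∀ q₀ q₁ : P, π q₀ = π q₁ ↔ ∃ g : G, g • q₀ = q₁)
    (U : Set (P × P))
    (hUinv : ∀ q₀ q₁ : P, (q₀, q₁) ∈ U → ∀ g₀ g₁ : G, (g₀ • q₀, g₁ • q₁) ∈ U)
    (hUvert : ∀ q₀ q₁ : P, π q₀ = π q₁ → (q₀, q₁) ∈ U)
    (A : P → P → G)
    (hAid : ∀ q : P, A q q = 1)
    (hAequiv : ∀ q₀ q₁ : P, (q₀, q₁) ∈ U → ∀ g₀ g₁ : G,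
      A (g₀ • q₀) (g₁ • q₁) = g₁ * A q₀ q₁ * g₀⁻¹)
    (V : Set B) (s : B → P) (hs : ∀ m ∈ V, π (s m) = m)
    (V'' : Set (B × B))
    (hV'' : V'' = {p : B × B | p.1 ∈ V ∧ p.2 ∈ V ∧ (s p.1, s p.2) ∈ U})
    -- the discrete path `m_•` is subordinated to `V''`
    (N : ℕ) (m : ℕ → B) (hm0V : m 0 ∈ V)
    (hm : ∀ k < N, (m k, m (k + 1)) ∈ V'')
    -- `q_•` is the discrete horizontal lift of `m_•` with respect to `h_A`,
    -- starting at `q 0 ∈ π⁻¹(m₀)`: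
    -- `q (k+1) = h_{A,2}(q k, m (k+1)) = A(q k, q')⁻¹ • q'` for a choice of `q'`
    (q : ℕ → P) (hq0 : π (q 0) = m 0)
    (hlift : ∀ k < N, ∃ q' : P, π q' = m (k + 1) ∧ (q k, q') ∈ U ∧
      q (k + 1) = (A (q k) q')⁻¹ • q') :
    -- (a) unique `g_k` with `q_k = g_k • s(m_k)`
    (∀ k ≤ N, ∃! g : G, q k = g • s (m k)) ∧
    -- (b) the recursion and the resulting parallel transport formula
    (∀ g : ℕ → G, (∀ k ≤ N, q k = g k • s (m k)) →
      (∀ k < N, g (k + 1) = g k * (A (s (m k)) (s (m (k + 1))))⁻¹) ∧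
      g N = g 0 *
        (((List.range N).map (fun k => (A (s (m k)) (s (m (k + 1))))⁻¹)).prod) ∧
      q N = (g 0 *
        (((List.range N).map (fun k => (A (s (m k)) (s (m (k + 1))))⁻¹)).prod))
          • s (m N)) :=
  local_expression_of_discrete_parallel_transport_general π hfree hπ U A hAequiv V s hs V'' hV'' N m
    hm0V hm q hq0 hlift
end

section
/- Let G be a group, Q a set, U ⊆ Q × Q, A : U → G any map, and define B_A(q₀,q₁,q₂) := A(q₀,q₂)⁻¹ · A(q₁,q₂) · A(q₀,q₁) for (q₀,q₁,q₂) ∈ U⁽³⁾ := {(q₀,q₁,q₂) : (q_j,q_k) ∈ U for all 0 ≤ j < k ≤ 2}. Then for every N ≥ 2 and every sequence q₀,…,q_N ∈ Q such that (q₀,q_k,q_{k+1}) ∈ U⁽³⁾ for all k = 1,…,N−1, one has (∏_{k=1}^{N} A(q_{k-1},q_k)⁻¹) · A(q₀,q_N) = ∏_{k=1}^{N−1} B_A(q₀,q_k,q_{k+1})⁻¹, where ∏_{k=1}^N a_k denotes the ordered product a₁·a₂·⋯·a_N. -/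
/-!
Since `B_A(q₀,q_k,q_{k+1})⁻¹ = A(q₀,q_k)⁻¹ · A(q_k,q_{k+1})⁻¹ · A(q₀,q_{k+1})`, multiplying the
curvature inverses in order telescopes: each `A(q₀,q_{k+1})` cancels against the
`A(q₀,q_{k+1})⁻¹` opening the next factor.
-/

section Curvature

variable {G : Type*} [Group G] {Q : Type*}

def curvature (A : Q → Q → G) (a b c : Q) : G :=
  (A a c)⁻¹ * A b c * A a b

theorem curvature_inv (A : Q → Q → G) (a b c : Q) :
    (curvature A a b c)⁻¹ = (A a b)⁻¹ * (A b c)⁻¹ * A a c := by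
  simp [curvature, mul_assoc]

theorem prod_connection_inv_mul_eq_prod_curvature_inv (A : Q → Q → G) (q : ℕ → Q) (n : ℕ) :
    ((List.range (n + 1)).map (fun k => (A (q k) (q (k + 1)))⁻¹)).prod * A (q 0) (q (n + 1))
      = ((List.range n).map (fun k => (curvature A (q 0) (q (k + 1)) (q (k + 2)))⁻¹)).prod := by
  induction n with
  | zero => simp
  | succ n ih =>
    rw [List.prod_range_succ _ (n + 1)]
    conv_rhs => rw [List.prod_range_succ, ← ih, curvature_inv]
    simp [mul_assoc]

end Curvature

theorem product_of_connection_values_and_product_of_curvature_values_general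
    {G : Type*} [Group G] {Q : Type*}
    (A : Q → Q → G)
    (BA : Q → Q → Q → G)
    (hBA : ∀ q₀ q₁ q₂ : Q, BA q₀ q₁ q₂ = (A q₀ q₂)⁻¹ * A q₁ q₂ * A q₀ q₁)
    (N : ℕ) (hN : 2 ≤ N) (q : ℕ → Q) :
    (((List.range N).map (fun k => (A (q k) (q (k + 1)))⁻¹)).prod) * A (q 0) (q N)
      = ((List.range (N - 1)).map
          (fun k => (BA (q 0) (q (k + 1)) (q (k + 2)))⁻¹)).prod := by
  have hBA_eq : BA = curvature A := funext₃ hBA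
  obtain ⟨n, rfl⟩ : ∃ n, N = n + 1 := ⟨N - 1, by omega⟩
  rw [hBA_eq, Nat.add_sub_cancel]
  exact prod_connection_inv_mul_eq_prod_curvature_inv A q n

/-- for any map `A : U → G` (`U ⊆ Q × Q`) with curvature
`B_A(q₀,q₁,q₂) := A(q₀,q₂)⁻¹ · A(q₁,q₂) · A(q₀,q₁)`, every `N ≥ 2` and every
sequence `q₀,…,q_N` with `(q₀,q_k,q_{k+1}) ∈ U⁽³⁾` for `k = 1,…,N−1`, one has
`(∏_{k=1}^{N} A(q_{k-1},q_k)⁻¹) · A(q₀,q_N) = ∏_{k=1}^{N−1} B_A(q₀,q_k,q_{k+1})⁻¹`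
(ordered products). -/
theorem product_of_connection_values_and_product_of_curvature_values
    {G : Type*} [Group G] {Q : Type*}
    (U : Set (Q × Q)) (A : Q → Q → G)
    (BA : Q → Q → Q → G)
    (hBA : ∀ q₀ q₁ q₂ : Q, BA q₀ q₁ q₂ = (A q₀ q₂)⁻¹ * A q₁ q₂ * A q₀ q₁)
    (N : ℕ) (hN : 2 ≤ N) (q : ℕ → Q)
    (hq : ∀ k, 1 ≤ k → k ≤ N - 1 →
      (q 0, q k) ∈ U ∧ (q 0, q (k + 1)) ∈ U ∧ (q k, q (k + 1)) ∈ U) :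
    (((List.range N).map (fun k => (A (q k) (q (k + 1)))⁻¹)).prod) * A (q 0) (q N)
      = ((List.range (N - 1)).map
          (fun k => (BA (q 0) (q (k + 1)) (q (k + 2)))⁻¹)).prod :=
  product_of_connection_values_and_product_of_curvature_values_general A BA hBA N hN q
end

section
/- Assume G is abelian. Let A be a discrete connection form with D-type domain U, s : V → P a section over V ⊆ B, N ≥ 2, and m_• = (m₀,…,m_N) a discrete loop in B (m_N = m₀) such that (m₀,m_k,m_{k+1}) ∈ V''⁽³⁾ for all k = 0,…,N−1. Then the discrete holonomy phase satisfies HP(m_•,q̄) = ∏_{k=1}^{N−1} B_{A,s}(m₀,m_k,m_{k+1})⁻¹ for every q̄ ∈ π⁻¹(m₀). -/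
/-- telescoping identity for the curvature product in a commutative group -/
lemma aux_curv_prod {G : Type*} [CommGroup G] (a b : ℕ → G) (n : ℕ) :
    ((List.range n).map (fun k => ((b (k + 2))⁻¹ * a (k + 1) * b (k + 1))⁻¹)).prod
      = b (n + 1) * (b 1)⁻¹ * ((List.range n).map (fun j => (a (j + 1))⁻¹)).prod := by
  induction n with
  | zero => simp
  | succ n ih =>
    have h2 : n + 1 + 1 = n + 2 := rfl
    simp only [List.range_succ, List.map_append, List.prod_append, ih, List.map_cons,
      List.map_nil, List.prod_cons, List.prod_nil, h2]
    simp only [mul_assoc, mul_inv_rev, mul_comm, mul_left_comm, inv_inv]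
    rw [mul_left_comm (b (n + 1)) ((b 1)⁻¹), mul_left_comm (b (n + 1)) ((a (n + 1))⁻¹),
      mul_inv_cancel_left]

/-- peeling off the first factor of the product -/
lemma aux_first_factor {G : Type*} [CommGroup G] (a : ℕ → G) (n : ℕ) :
    ((List.range (n + 1)).map (fun j => (a j)⁻¹)).prod
      = (a 0)⁻¹ * ((List.range n).map (fun j => (a (j + 1))⁻¹)).prod := by
  rw [List.range_succ_eq_map]
  simp [List.map_map, Function.comp_def]

/-- for an abelian structure group `G`, the discrete holonomy
phase `HP(m_•,q̄) = κ(q̄, q_N)` around a discrete loop `m_•` (with all triples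
`(m₀,m_k,m_{k+1})` in `V''⁽³⁾`) equals
`∏_{k=1}^{N−1} B_{A,s}(m₀,m_k,m_{k+1})⁻¹` for every starting point
`q̄ ∈ π⁻¹(m₀)`, where `B_{A,s}(m₀,m₁,m₂) = B_A(s(m₀),s(m₁),s(m₂))` is the
local expression of the curvature of `A`. -/
theorem discrete_holonomy_phase_abelian_curvature_formula
    {G : Type*} [CommGroup G] {P : Type*} [MulAction G P] {B : Type*}
    (π : P → B)
    (hfree : ∀ (g : G) (q : P), g • q = q → g = 1)
    (hπ : ∀ q₀ q₁ : P, π q₀ = π q₁ ↔ ∃ g : G, g • q₀ = q₁)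
    (κ : P → P → G)
    (hκ : ∀ q₀ q₁ : P, π q₀ = π q₁ → κ q₀ q₁ • q₀ = q₁)
    (U : Set (P × P))
    (hUinv : ∀ q₀ q₁ : P, (q₀, q₁) ∈ U → ∀ g₀ g₁ : G, (g₀ • q₀, g₁ • q₁) ∈ U)
    (hUvert : ∀ q₀ q₁ : P, π q₀ = π q₁ → (q₀, q₁) ∈ U)
    (A : P → P → G)
    (hAid : ∀ q : P, A q q = 1)
    (hAequiv : ∀ q₀ q₁ : P, (q₀, q₁) ∈ U → ∀ g₀ g₁ : G,
      A (g₀ • q₀) (g₁ • q₁) = g₁ * A q₀ q₁ * g₀⁻¹)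
    -- the curvature of `A`
    (BA : P → P → P → G)
    (hBA : ∀ q₀ q₁ q₂ : P, BA q₀ q₁ q₂ = (A q₀ q₂)⁻¹ * A q₁ q₂ * A q₀ q₁)
    (V : Set B) (s : B → P) (hs : ∀ m ∈ V, π (s m) = m)
    (V'' : Set (B × B))
    (hV'' : V'' = {p : B × B | p.1 ∈ V ∧ p.2 ∈ V ∧ (s p.1, s p.2) ∈ U})
    -- a discrete loop `m_•` with all triples `(m₀, m_k, m_{k+1})` in `V''⁽³⁾`
    (N : ℕ) (hN : 2 ≤ N) (m : ℕ → B) (hloop : m N = m 0)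
    (htr : ∀ k < N, ∀ x ∈ ({m 0, m k, m (k + 1)} : Set B),
      ∀ y ∈ ({m 0, m k, m (k + 1)} : Set B), (x, y) ∈ V'')
    -- an arbitrary starting point `q̄ ∈ π⁻¹(m₀)` and the discrete horizontal
    -- lift `q_•` of `m_•` (with respect to `h_A`) starting at `q̄`
    (qbar : P) (hqbar : π qbar = m 0)
    (q : ℕ → P) (hq0 : q 0 = qbar)
    (hlift : ∀ k < N, ∃ q' : P, π q' = m (k + 1) ∧ (q k, q') ∈ U ∧
      q (k + 1) = (A (q k) q')⁻¹ • q') :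
    κ qbar (q N)
      = ((List.range (N - 1)).map
          (fun k => (BA (s (m 0)) (s (m (k + 1))) (s (m (k + 2))))⁻¹)).prod := by
  -- cancellation from freeness
  have hcan : ∀ (g g' : G) (p : P), g • p = g' • p → g = g' := by
    intro g g' p h
    have h1 : (g'⁻¹ * g) • p = p := by rw [mul_smul, h, inv_smul_smul]
    exact (inv_mul_eq_one.mp (hfree _ _ h1)).symm
  -- membership of the `m k` in `V`
  have hmV : ∀ k ≤ N, m k ∈ V := by
    intro k hk
    rcases Nat.lt_or_ge k N with h | h
    · have := htr k h (m k) (by simp) (m k) (by simp)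
      rw [hV''] at this; exact this.1
    · have hk' : k = N := le_antisymm hk h
      subst hk'
      have := htr 0 (by omega) (m 0) (by simp) (m 0) (by simp)
      rw [hV''] at this
      rw [hloop]; exact this.1
  -- the consecutive pairs lie in `U`
  have hUpair : ∀ k < N, (s (m k), s (m (k + 1))) ∈ U := by
    intro k hk
    have := htr k hk (m k) (by simp) (m (k + 1)) (by simp)
    rw [hV''] at this; exact this.2.2
  -- the key induction: `q k = (g₀ * ∏_{j<k} a_j⁻¹) • s (m k)`
  have key : ∀ k, k ≤ N → q k =
      (κ (s (m 0)) qbar *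
        ((List.range k).map (fun j => (A (s (m j)) (s (m (j + 1))))⁻¹)).prod) • s (m k) := by
    intro k
    induction k with
    | zero =>
      intro _
      have h0 : π (s (m 0)) = π qbar := by rw [hs (m 0) (hmV 0 (by omega)), hqbar]
      simp only [List.range_zero, List.map_nil, List.prod_nil, mul_one]
      rw [hq0]
      exact (hκ _ _ h0).symm
    | succ k ih =>
      intro hk
      have hkN : k < N := hk
      have ihk := ih (le_of_lt hkN)
      obtain ⟨q', hπq', hUq', hqsucc⟩ := hlift k hkN
      have hπsmk1 : π (s (m (k + 1))) = π q' := by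
        rw [hs (m (k + 1)) (hmV (k + 1) hk), hπq']
      obtain ⟨h, hq'eq⟩ : ∃ h : G, h • s (m (k + 1)) = q' := ⟨_, hκ _ _ hπsmk1⟩
      subst hq'eq
      have hA : A (q k) (h • s (m (k + 1))) =
          h * A (s (m k)) (s (m (k + 1))) *
            (κ (s (m 0)) qbar *
              ((List.range k).map (fun j => (A (s (m j)) (s (m (j + 1))))⁻¹)).prod)⁻¹ := by
        conv_lhs => rw [ihk]
        exact hAequiv _ _ (hUpair k hkN) _ _
      rw [hqsucc, hA, smul_smul]
      congr 1
      simp only [List.range_succ, List.map_append, List.prod_append, List.map_cons,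
        List.map_nil, List.prod_cons, List.prod_nil]
      group
  -- compute `κ qbar (q N)`
  have hqN := key N le_rfl
  rw [hloop] at hqN
  have hq0' : κ (s (m 0)) qbar • s (m 0) = qbar :=
    hκ _ _ (by rw [hs (m 0) (hmV 0 (by omega)), hqbar])
  have hπN : π qbar = π (q N) := by
    rw [hqbar, ← hs (m 0) (hmV 0 (by omega))]
    exact (hπ _ _).mpr ⟨_, hqN.symm⟩
  have hκN := hκ qbar (q N) hπN
  set t := κ qbar (q N) with ht
  rw [show qbar = κ (s (m 0)) qbar • s (m 0) from hq0'.symm] at hκN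
  rw [hqN, smul_smul] at hκN
  have hval : t * κ (s (m 0)) qbar =
      κ (s (m 0)) qbar *
        ((List.range N).map (fun j => (A (s (m j)) (s (m (j + 1))))⁻¹)).prod :=
    hcan _ _ _ hκN
  have hLHS : t =
      ((List.range N).map (fun j => (A (s (m j)) (s (m (j + 1))))⁻¹)).prod := by
    have := hval
    rw [mul_comm (κ (s (m 0)) qbar)] at this
    exact mul_right_cancel this
  rw [hLHS]
  -- rewrite RHS using the curvature formula and telescope
  have hR := aux_curv_prod (fun k => A (s (m k)) (s (m (k + 1))))
      (fun k => A (s (m 0)) (s (m k))) (N - 1)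
  have hN1 : N - 1 + 1 = N := by omega
  rw [hN1] at hR
  have hbN : A (s (m 0)) (s (m N)) = 1 := by rw [hloop, hAid]
  simp only [hBA]
  rw [hR, hbN, one_mul]
  have hP := aux_first_factor (fun j => A (s (m j)) (s (m (j + 1)))) (N - 1)
  rw [hN1] at hP
  rw [hP]
end

section
/- Assume G is abelian. Let A be a discrete connection form with D-type domain U, s : V → P a section over V ⊆ B, 𝔤 an abelian group written additively, exp : 𝔤 → G a homomorphism, W ⊆ V'' a subset, and ℓA : W → 𝔤 a map with exp(ℓA(m₀,m₁)) = A_s(m₀,m₁) for all (m₀,m₁) ∈ W. Let N ≥ 2 and m_• = (m₀,…,m_N) be a discrete loop in B (m_N = m₀) such that all pairs among (m₀, m_k, m_{k+1}) lie in W for every k = 0,…,N−1. Then the discrete holonomy phase satisfies HP(m_•,q̄) = exp(−Σ_{k=1}^{N} ℓA(m_{k-1},m_k)) for every q̄ ∈ π⁻¹(m₀). -/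
/-!
Write every point of the lift in the gauge of the section: if `q_k = g • s(m_k)`, equivariance
of `A` gives `A(q_k, h • s(m_{k+1})) = h · A_s(m_k, m_{k+1}) · g⁻¹` whatever `h` is, so the next
point is `(g · A_s(m_k, m_{k+1})⁻¹) • s(m_{k+1})`. Along the loop the gauge picks up
`∏ₖ A_s(m_k, m_{k+1})⁻¹`, and since `G` is abelian and `m_N = m_0` this is the element carrying
`q̄` to `q_N`, i.e. the holonomy phase; in terms of `ℓA` it is `exp(-∑ₖ ℓA(m_k, m_{k+1}))`.
-/

open Finset

lemma eq_of_smul_eq_smul_of_free_s16 {G P : Type*} [Group G] [MulAction G P]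
    (hfree : ∀ (g : G) (q : P), g • q = q → g = 1) {g h : G} {q : P} (hgh : g • q = h • q) :
    g = h := by
  refine (inv_mul_eq_one.mp (hfree (h⁻¹ * g) q ?_)).symm
  rw [mul_smul, hgh, inv_smul_smul]

lemma map_neg_sum_eq_prod_inv {𝔤 G ι : Type*} [AddCommGroup 𝔤] [CommGroup G]
    (exp : 𝔤 → G) (hexp : ∀ x y : 𝔤, exp (x + y) = exp x * exp y) (s : Finset ι) (f : ι → 𝔤) :
    exp (-∑ i ∈ s, f i) = ∏ i ∈ s, (exp (f i))⁻¹ := by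
  let φ : 𝔤 →+ Additive G := AddMonoidHom.mk' (fun x ↦ Additive.ofMul (exp x)) hexp
  calc exp (-∑ i ∈ s, f i) = (φ (-∑ i ∈ s, f i)).toMul := rfl
    _ = (∑ i ∈ s, -φ (f i)).toMul := by rw [map_neg, map_sum, sum_neg_distrib]
    _ = ∏ i ∈ s, (exp (f i))⁻¹ := toMul_sum _ _

section HorizontalLift

variable {G P : Type*} {U : Set (P × P)} {A : P → P → G}

lemma horizontal_lift_step_smul [Group G] [MulAction G P]
    (hA : ∀ q₀ q₁ : P, (q₀, q₁) ∈ U → ∀ g₀ g₁ : G, A (g₀ • q₀) (g₁ • q₁) = g₁ * A q₀ q₁ * g₀⁻¹)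
    {p₀ p₁ : P} (hp : (p₀, p₁) ∈ U) (g h : G) :
    (A (g • p₀) (h • p₁))⁻¹ • h • p₁ = (g * (A p₀ p₁)⁻¹) • p₁ := by
  rw [hA p₀ p₁ hp, ← mul_smul]
  congr 1
  group

lemma horizontal_lift_eq_prod_inv_smul [CommGroup G] [MulAction G P]
    (hA : ∀ q₀ q₁ : P, (q₀, q₁) ∈ U → ∀ g₀ g₁ : G, A (g₀ • q₀) (g₁ • q₁) = g₁ * A q₀ q₁ * g₀⁻¹)
    {N : ℕ} {p q : ℕ → P} (hp : ∀ k < N, (p k, p (k + 1)) ∈ U) {g : G} (hq0 : q 0 = g • p 0)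
    (hq : ∀ k < N, ∃ h : G, q (k + 1) = (A (q k) (h • p (k + 1)))⁻¹ • h • p (k + 1)) :
    ∀ k ≤ N, q k = (g * ∏ j ∈ range k, (A (p j) (p (j + 1)))⁻¹) • p k := by
  intro k hk
  induction k with
  | zero => simpa using hq0
  | succ k ih =>
    obtain ⟨h, hqk⟩ := hq k hk
    rw [hqk, ih (by omega), horizontal_lift_step_smul hA (hp k hk), prod_range_succ, mul_assoc]

end HorizontalLift

theorem discrete_holonomy_phase_log_connection_formula_general
    {G : Type*} [CommGroup G] {P : Type*} [MulAction G P] {B : Type*}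
    (π : P → B)
    (hfree : ∀ (g : G) (q : P), g • q = q → g = 1)
    (hπ : ∀ q₀ q₁ : P, π q₀ = π q₁ ↔ ∃ g : G, g • q₀ = q₁)
    (κ : P → P → G)
    (hκ : ∀ q₀ q₁ : P, π q₀ = π q₁ → κ q₀ q₁ • q₀ = q₁)
    (U : Set (P × P))
    (A : P → P → G)
    (hAequiv : ∀ q₀ q₁ : P, (q₀, q₁) ∈ U → ∀ g₀ g₁ : G,
      A (g₀ • q₀) (g₁ • q₁) = g₁ * A q₀ q₁ * g₀⁻¹)
    (V : Set B) (s : B → P) (hs : ∀ m ∈ V, π (s m) = m)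
    (V'' : Set (B × B))
    (hV'' : V'' = {p : B × B | p.1 ∈ V ∧ p.2 ∈ V ∧ (s p.1, s p.2) ∈ U})
    -- the exponential homomorphism and the logarithm of `A_s`
    {𝔤 : Type*} [AddCommGroup 𝔤]
    (exp : 𝔤 → G) (hexp : ∀ x y : 𝔤, exp (x + y) = exp x * exp y)
    (W : Set (B × B)) (hW : W ⊆ V'')
    (lA : B → B → 𝔤)
    (hlA : ∀ m₀ m₁ : B, (m₀, m₁) ∈ W → exp (lA m₀ m₁) = A (s m₀) (s m₁))
    -- a discrete loop `m_•` all of whose triples `(m₀, m_k, m_{k+1})` have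
    -- all their pairs in `W`
    (N : ℕ) (hN : 2 ≤ N) (m : ℕ → B) (hloop : m N = m 0)
    (htr : ∀ k < N, ∀ x ∈ ({m 0, m k, m (k + 1)} : Set B),
      ∀ y ∈ ({m 0, m k, m (k + 1)} : Set B), (x, y) ∈ W)
    -- an arbitrary starting point `q̄ ∈ π⁻¹(m₀)` and the discrete horizontal
    -- lift `q_•` of `m_•` (with respect to `h_A`) starting at `q̄`
    (qbar : P) (hqbar : π qbar = m 0)
    (q : ℕ → P) (hq0 : q 0 = qbar)
    (hlift : ∀ k < N, ∃ q' : P, π q' = m (k + 1) ∧ (q k, q') ∈ U ∧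
      q (k + 1) = (A (q k) q')⁻¹ • q') :
    κ qbar (q N)
      = exp (-(∑ k ∈ Finset.range N, lA (m k) (m (k + 1)))) := by
  have hWk : ∀ k < N, (m k, m (k + 1)) ∈ W := fun k hk ↦ htr k hk _ (by simp) _ (by simp)
  have hV''k : ∀ k < N, m k ∈ V ∧ m (k + 1) ∈ V ∧ (s (m k), s (m (k + 1))) ∈ U :=
    fun k hk ↦ by simpa [hV''] using hW (hWk k hk)
  have hs0 : κ (s (m 0)) qbar • s (m 0) = qbar :=
    hκ _ _ (by rw [hs _ (hV''k 0 (by omega)).1, hqbar])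
  have hstep : ∀ k < N, ∃ h : G,
      q (k + 1) = (A (q k) (h • s (m (k + 1))))⁻¹ • h • s (m (k + 1)) := by
    intro k hk
    obtain ⟨q', hq'π, -, hqk⟩ := hlift k hk
    refine ⟨κ (s (m (k + 1))) q', ?_⟩
    rwa [hκ _ _ (by rw [hs _ (hV''k k hk).2.1, hq'π])]
  set c := ∏ j ∈ range N, (A (s (m j)) (s (m (j + 1))))⁻¹
  have hqN : q N = c • qbar := by
    rw [horizontal_lift_eq_prod_inv_smul hAequiv (fun k hk ↦ (hV''k k hk).2.2) (hq0.trans hs0.symm)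
      hstep N le_rfl, hloop, mul_comm, mul_smul, hs0]
  have hphase : κ qbar (q N) = c :=
    eq_of_smul_eq_smul_of_free_s16 hfree <| by
      rw [hκ _ _ (by rw [hqN]; exact ((hπ _ _).2 ⟨c, rfl⟩)), hqN]
  rw [hphase, map_neg_sum_eq_prod_inv exp hexp]
  exact prod_congr rfl fun k hk ↦ by rw [hlA _ _ (hWk k (mem_range.mp hk))]

/-- for an abelian structure group `G`, exponential homomorphism
`exp : 𝔤 → G`, and a logarithm `ℓA` of the local expression `A_s` of a discrete
connection form `A` (i.e. `exp(ℓA(m₀,m₁)) = A_s(m₀,m₁) = A(s(m₀),s(m₁))` on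
`W ⊆ V''`), the discrete holonomy phase around a discrete loop `m_•` all of
whose triples `(m₀,m_k,m_{k+1})` have all their pairs in `W` satisfies
`HP(m_•,q̄) = κ(q̄,q_N) = exp(−Σ_{k=1}^{N} ℓA(m_{k-1},m_k))` for every
`q̄ ∈ π⁻¹(m₀)`. -/
theorem discrete_holonomy_phase_log_connection_formula
    {G : Type*} [CommGroup G] {P : Type*} [MulAction G P] {B : Type*}
    (π : P → B)
    (hfree : ∀ (g : G) (q : P), g • q = q → g = 1)
    (hπ : ∀ q₀ q₁ : P, π q₀ = π q₁ ↔ ∃ g : G, g • q₀ = q₁)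
    (κ : P → P → G)
    (hκ : ∀ q₀ q₁ : P, π q₀ = π q₁ → κ q₀ q₁ • q₀ = q₁)
    (U : Set (P × P))
    (hUinv : ∀ q₀ q₁ : P, (q₀, q₁) ∈ U → ∀ g₀ g₁ : G, (g₀ • q₀, g₁ • q₁) ∈ U)
    (hUvert : ∀ q₀ q₁ : P, π q₀ = π q₁ → (q₀, q₁) ∈ U)
    (A : P → P → G)
    (hAid : ∀ q : P, A q q = 1)
    (hAequiv : ∀ q₀ q₁ : P, (q₀, q₁) ∈ U → ∀ g₀ g₁ : G,
      A (g₀ • q₀) (g₁ • q₁) = g₁ * A q₀ q₁ * g₀⁻¹)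
    (V : Set B) (s : B → P) (hs : ∀ m ∈ V, π (s m) = m)
    (V'' : Set (B × B))
    (hV'' : V'' = {p : B × B | p.1 ∈ V ∧ p.2 ∈ V ∧ (s p.1, s p.2) ∈ U})
    -- the exponential homomorphism and the logarithm of `A_s`
    {𝔤 : Type*} [AddCommGroup 𝔤]
    (exp : 𝔤 → G) (hexp : ∀ x y : 𝔤, exp (x + y) = exp x * exp y)
    (W : Set (B × B)) (hW : W ⊆ V'')
    (lA : B → B → 𝔤)
    (hlA : ∀ m₀ m₁ : B, (m₀, m₁) ∈ W → exp (lA m₀ m₁) = A (s m₀) (s m₁))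
    -- a discrete loop `m_•` all of whose triples `(m₀, m_k, m_{k+1})` have
    -- all their pairs in `W`
    (N : ℕ) (hN : 2 ≤ N) (m : ℕ → B) (hloop : m N = m 0)
    (htr : ∀ k < N, ∀ x ∈ ({m 0, m k, m (k + 1)} : Set B),
      ∀ y ∈ ({m 0, m k, m (k + 1)} : Set B), (x, y) ∈ W)
    -- an arbitrary starting point `q̄ ∈ π⁻¹(m₀)` and the discrete horizontal
    -- lift `q_•` of `m_•` (with respect to `h_A`) starting at `q̄`
    (qbar : P) (hqbar : π qbar = m 0)
    (q : ℕ → P) (hq0 : q 0 = qbar)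
    (hlift : ∀ k < N, ∃ q' : P, π q' = m (k + 1) ∧ (q k, q') ∈ U ∧
      q (k + 1) = (A (q k) q')⁻¹ • q') :
    κ qbar (q N)
      = exp (-(∑ k ∈ Finset.range N, lA (m k) (m (k + 1)))) :=
  discrete_holonomy_phase_log_connection_formula_general π hfree hπ κ hκ U A hAequiv V s hs V'' hV''
    exp hexp W hW lA hlA N hN m hloop htr qbar hqbar q hq0 hlift
end

section
/- Assume G is abelian. Let A be a discrete connection form with D-type domain U, s : V → P a section over V ⊆ B, 𝔤 an abelian group written additively, and exp : 𝔤 → G a homomorphism. Suppose U₀ ⊆ 𝔤 contains 0 and exp is injective on U₀, and U₀' ⊆ U₀ satisfies: −a ∈ U₀' whenever a ∈ U₀', and a + b + c ∈ U₀ for all a, b, c ∈ U₀'. Let W ⊆ V'', let ℓA : W → 𝔤 take values in U₀' with exp ∘ ℓA = A_s on W, and let ℓB : W⁽³⁾ → 𝔤 take values in U₀ with exp(ℓB(m₀,m₁,m₂)) = B_{A,s}(m₀,m₁,m₂) for all (m₀,m₁,m₂) ∈ W⁽³⁾ := {(m₀,m₁,m₂) : (m_j,m_k) ∈ W for all j,k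 ∈ {0,1,2}}. Let N ≥ 2 and m_• = (m₀,…,m_N) be a discrete loop in B (m_N = m₀) with (m₀,m_k,m_{k+1}) ∈ W⁽³⁾ for all k = 0,…,N−1. Then HP(m_•,q̄) = exp(−Σ_{k=1}^{N−1} ℓB(m₀,m_k,m_{k+1})) for every q̄ ∈ π⁻¹(m₀). -/
/-- for an abelian structure group `G`, exponential homomorphism
`exp : 𝔤 → G` injective on `U₀ ∋ 0` (with `U₀' ⊆ U₀` closed under negation and
`U₀' + U₀' + U₀' ⊆ U₀`), a logarithm `ℓA : W → U₀'` of the local expression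
`A_s` of a discrete connection form `A`, and a logarithm `ℓB : W⁽³⁾ → U₀` of
the local expression `B_{A,s}` of its curvature, the discrete holonomy phase
around a discrete loop `m_•` with `(m₀,m_k,m_{k+1}) ∈ W⁽³⁾` for all `k`
satisfies `HP(m_•,q̄) = κ(q̄,q_N) = exp(−Σ_{k=1}^{N−1} ℓB(m₀,m_k,m_{k+1}))` for
every `q̄ ∈ π⁻¹(m₀)`. -/
theorem discrete_holonomy_phase_log_curvature_formula
    {G : Type*} [CommGroup G] {P : Type*} [MulAction G P] {B : Type*}
    (π : P → B)
    (hfree : ∀ (g : G) (q : P), g • q = q → g = 1)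
    (hπ : ∀ q₀ q₁ : P, π q₀ = π q₁ ↔ ∃ g : G, g • q₀ = q₁)
    (κ : P → P → G)
    (hκ : ∀ q₀ q₁ : P, π q₀ = π q₁ → κ q₀ q₁ • q₀ = q₁)
    (U : Set (P × P))
    (hUinv : ∀ q₀ q₁ : P, (q₀, q₁) ∈ U → ∀ g₀ g₁ : G, (g₀ • q₀, g₁ • q₁) ∈ U)
    (hUvert : ∀ q₀ q₁ : P, π q₀ = π q₁ → (q₀, q₁) ∈ U)
    (A : P → P → G)
    (hAid : ∀ q : P, A q q = 1)
    (hAequiv : ∀ q₀ q₁ : P, (q₀, q₁) ∈ U → ∀ g₀ g₁ : G,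
      A (g₀ • q₀) (g₁ • q₁) = g₁ * A q₀ q₁ * g₀⁻¹)
    -- the curvature of `A`
    (BA : P → P → P → G)
    (hBA : ∀ q₀ q₁ q₂ : P, BA q₀ q₁ q₂ = (A q₀ q₂)⁻¹ * A q₁ q₂ * A q₀ q₁)
    (V : Set B) (s : B → P) (hs : ∀ m ∈ V, π (s m) = m)
    (V'' : Set (B × B))
    (hV'' : V'' = {p : B × B | p.1 ∈ V ∧ p.2 ∈ V ∧ (s p.1, s p.2) ∈ U})
    -- the exponential homomorphism, injective on `U₀ ∋ 0`
    {𝔤 : Type*} [AddCommGroup 𝔤]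
    (exp : 𝔤 → G) (hexp : ∀ x y : 𝔤, exp (x + y) = exp x * exp y)
    (U₀ U₀' : Set 𝔤) (h0 : (0 : 𝔤) ∈ U₀) (hsub : U₀' ⊆ U₀)
    (hinj : ∀ a ∈ U₀, ∀ b ∈ U₀, exp a = exp b → a = b)
    (hneg : ∀ a ∈ U₀', -a ∈ U₀')
    (hsum : ∀ a ∈ U₀', ∀ b ∈ U₀', ∀ c ∈ U₀', a + b + c ∈ U₀)
    -- the logarithm `ℓA` of `A_s` on `W ⊆ V''`, with values in `U₀'`
    (W : Set (B × B)) (hW : W ⊆ V'')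
    (lA : B → B → 𝔤)
    (hlAval : ∀ m₀ m₁ : B, (m₀, m₁) ∈ W → lA m₀ m₁ ∈ U₀')
    (hlA : ∀ m₀ m₁ : B, (m₀, m₁) ∈ W → exp (lA m₀ m₁) = A (s m₀) (s m₁))
    -- the logarithm `ℓB` of `B_{A,s}` on `W⁽³⁾`, with values in `U₀`
    (lB : B → B → B → 𝔤)
    (hlBval : ∀ m₀ m₁ m₂ : B,
      (∀ x ∈ ({m₀, m₁, m₂} : Set B), ∀ y ∈ ({m₀, m₁, m₂} : Set B), (x, y) ∈ W) →
      lB m₀ m₁ m₂ ∈ U₀)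
    (hlB : ∀ m₀ m₁ m₂ : B,
      (∀ x ∈ ({m₀, m₁, m₂} : Set B), ∀ y ∈ ({m₀, m₁, m₂} : Set B), (x, y) ∈ W) →
      exp (lB m₀ m₁ m₂) = BA (s m₀) (s m₁) (s m₂))
    -- a discrete loop `m_•` with `(m₀, m_k, m_{k+1}) ∈ W⁽³⁾` for all `k`
    (N : ℕ) (hN : 2 ≤ N) (m : ℕ → B) (hloop : m N = m 0)
    (htr : ∀ k < N, ∀ x ∈ ({m 0, m k, m (k + 1)} : Set B),
      ∀ y ∈ ({m 0, m k, m (k + 1)} : Set B), (x, y) ∈ W)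
    -- an arbitrary starting point `q̄ ∈ π⁻¹(m₀)` and the discrete horizontal
    -- lift `q_•` of `m_•` (with respect to `h_A`) starting at `q̄`
    (qbar : P) (hqbar : π qbar = m 0)
    (q : ℕ → P) (hq0 : q 0 = qbar)
    (hlift : ∀ k < N, ∃ q' : P, π q' = m (k + 1) ∧ (q k, q') ∈ U ∧
      q (k + 1) = (A (q k) q')⁻¹ • q') :
    κ qbar (q N)
      = exp (-(∑ k ∈ Finset.range (N - 1), lB (m 0) (m (k + 1)) (m (k + 2)))) := by
  have hN0 : 0 < N := by omega
  -- exp is a homomorphism: basic facts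
  have hexp0 : exp 0 = 1 := by
    have h := hexp 0 0
    rw [add_zero] at h
    exact mul_left_cancel (a := exp 0) (by rw [mul_one, ← h])
  have hexpneg : ∀ x : 𝔤, exp (-x) = (exp x)⁻¹ := by
    intro x
    have h := hexp (-x) x
    rw [neg_add_cancel, hexp0] at h
    exact eq_inv_of_mul_eq_one_left h.symm
  have hexpsum : ∀ (n : ℕ) (f : ℕ → 𝔤),
      exp (∑ k ∈ Finset.range n, f k) = ∏ k ∈ Finset.range n, exp (f k) := by
    intro n f
    induction n with
    | zero => simpa using hexp0
    | succ n ih => rw [Finset.sum_range_succ, Finset.prod_range_succ, hexp, ih]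
  have hmem : ∀ k < N, (m k, m (k + 1)) ∈ W := fun k hk =>
    htr k hk (m k) (by simp) (m (k + 1)) (by simp)
  have hVmem : ∀ k ≤ N, m k ∈ V := by
    intro k hk
    rcases lt_or_eq_of_le hk with h | h
    · have := hW (hmem k h); rw [hV''] at this; exact this.1
    · rw [h, hloop]
      have := hW (hmem 0 hN0); rw [hV''] at this; exact this.1
  have hπs : ∀ k ≤ N, π (s (m k)) = m k := fun k hk => hs _ (hVmem k hk)
  have hsU : ∀ k < N, (s (m k), s (m (k + 1))) ∈ U := by
    intro k hk
    have := hW (hmem k hk); rw [hV''] at this; exact this.2.2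
  have hκuniq : ∀ (q₀ q₁ : P) (g : G), g • q₀ = q₁ → κ q₀ q₁ = g := by
    intro q₀ q₁ g hg
    have hπeq : π q₀ = π q₁ := (hπ q₀ q₁).2 ⟨g, hg⟩
    have h1 := hκ q₀ q₁ hπeq
    have h2 : (g⁻¹ * κ q₀ q₁) • q₀ = q₀ := by
      rw [mul_smul, h1, ← hg, inv_smul_smul]
    exact (inv_mul_eq_one.mp (hfree _ _ h2)).symm
  -- main induction on the horizontal lift
  have key : ∀ k ≤ N, q k =
      (κ (s (m 0)) qbar * (∏ j ∈ Finset.range k, A (s (m j)) (s (m (j + 1))))⁻¹)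
        • s (m k) := by
    intro k hk
    induction k with
    | zero =>
      simp only [Finset.range_zero, Finset.prod_empty, inv_one, mul_one, hq0]
      exact (hκ _ _ (by rw [hπs 0 (by omega), hqbar])).symm
    | succ k ih =>
      have hkN : k < N := hk
      have ihh := ih (le_of_lt hkN)
      obtain ⟨q', hπq', hU', hqsucc⟩ := hlift k hkN
      set h := κ (s (m (k + 1))) q' with hhdef
      have hq' : h • s (m (k + 1)) = q' :=
        hκ _ _ (by rw [hπs (k + 1) hk, hπq'])
      have hA : A (q k) q' =
          h * A (s (m k)) (s (m (k + 1)))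
            * (κ (s (m 0)) qbar
                * (∏ j ∈ Finset.range k, A (s (m j)) (s (m (j + 1))))⁻¹)⁻¹ := by
        rw [ihh, ← hq']
        exact hAequiv _ _ (hsU k hkN) _ _
      rw [hqsucc, hA, ← hq', smul_smul, Finset.prod_range_succ]
      congr 1
      simp [mul_inv_rev, mul_inv, inv_inv, mul_comm, mul_assoc, mul_left_comm]
  have hqN := key N le_rfl
  rw [hloop] at hqN
  have hq0' : κ (s (m 0)) qbar • s (m 0) = qbar :=
    hκ _ _ (by rw [hπs 0 (by omega), hqbar])
  have hqNbar : q N =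
      (∏ j ∈ Finset.range N, A (s (m j)) (s (m (j + 1))))⁻¹ • qbar := by
    rw [hqN, mul_comm, mul_smul, hq0']
  have hκval : κ qbar (q N)
      = (∏ j ∈ Finset.range N, A (s (m j)) (s (m (j + 1))))⁻¹ :=
    hκuniq _ _ _ hqNbar.symm
  rw [hκval, hexpneg, hexpsum]
  congr 1
  have hstep : ∀ k ∈ Finset.range (N - 1),
      exp (lB (m 0) (m (k + 1)) (m (k + 2))) =
        (A (s (m 0)) (s (m (k + 1))) / A (s (m 0)) (s (m (k + 2))))
          * A (s (m (k + 1))) (s (m (k + 2))) := by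
    intro k hk
    have hk' : k + 1 < N := by have := Finset.mem_range.mp hk; omega
    rw [hlB _ _ _ (htr (k + 1) hk'), hBA]
    rw [div_eq_mul_inv]
    simp [mul_comm, mul_assoc, mul_left_comm]
  rw [Finset.prod_congr rfl hstep, Finset.prod_mul_distrib]
  have htel := Finset.prod_range_div'
    (f := fun k => A (s (m 0)) (s (m (k + 1)))) (n := N - 1)
  rw [htel]
  have hNsub : N - 1 + 1 = N := by omega
  have hlast : A (s (m 0)) (s (m (N - 1 + 1))) = 1 := by
    rw [hNsub, hloop, hAid]
  rw [hlast, div_one]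
  conv_lhs => rw [← hNsub, Finset.prod_range_succ']
  rw [mul_comm]
end
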